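/- Fix d_A, d_B ≥ 1 and a unit vector ψ ∈ ℂ² ⊗ ℂ^{d_A} ⊗ ℂ^{d_B}. Let V_0, V_1 and V'_0, V'_1 be two pairs of orthogonal projections on ℂ² with V_0 + V_1 = I and V'_0 + V'_1 = I. Let A_0, A_1 be positive semidefinite matrices on ℂ^{d_A} with A_0 + A_1 ⪯ I, and B'_0, B'_1 positive semidefinite matrices on ℂ^{d_B} with B'_0 + B'_1 ⪯ I. Then 2·Σ_{a,b∈{0,1}} ⟨I·A_a·B'_b⟩_ψ ≤ Σ_{a,b∈{0,1}} ⟨(V_a + V'_b)·A_a·B'_b⟩_ψ + ⟨V_1·A_0·I⟩_ψ + ⟨V_0·A_1·I⟩_ψ + ⟨V'_1·I·B'_0⟩_ψ + ⟨V'_0·I·B'_1⟩_ψ. -/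

import Mathlib

/-! Write each `⟨I·A_a·B'_b⟩` once as `⟨V_0·A_a·B'_b⟩ + ⟨V_1·A_a·B'_b⟩` and once with `V'` in
place of `V`. The terms `⟨V_a·A_a·B'_b⟩` and `⟨V'_b·A_a·B'_b⟩` appear on the right; the remaining
ones, e.g. `⟨V_1·A_0·B'_b⟩` summed over `b`, are at most `⟨V_1·A_0·I⟩` because `B'_0 + B'_1 ⪯ I`
and a Kronecker product of positive semidefinite matrices is positive semidefinite. -/

open Matrix Kronecker BigOperators
open scoped ComplexOrder

noncomputable section

/-- ⟨ψ, (V ⊗ A ⊗ B) ψ⟩ as a real number. -/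
def exval {dA dB : ℕ} (χ : Fin 2 × Fin dA × Fin dB → ℂ)
    (V : Matrix (Fin 2) (Fin 2) ℂ) (A : Matrix (Fin dA) (Fin dA) ℂ)
    (B : Matrix (Fin dB) (Fin dB) ℂ) : ℝ :=
  (star χ ⬝ᵥ (V ⊗ₖ (A ⊗ₖ B)).mulVec χ).re

theorem Matrix.posSemidef_of_conjTranspose_eq_of_mul_self_eq {n 𝕜 : Type*} [Fintype n]
    [RCLike 𝕜] {P : Matrix n n 𝕜} (hP : Pᴴ = P ∧ P * P = P) : P.PosSemidef := by
  simpa only [hP.1, hP.2] using posSemidef_conjTranspose_mul_self P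

section exval

variable {dA dB : ℕ} (χ : Fin 2 × Fin dA × Fin dB → ℂ)
  {V W : Matrix (Fin 2) (Fin 2) ℂ} {A A' : Matrix (Fin dA) (Fin dA) ℂ}
  {B B' : Matrix (Fin dB) (Fin dB) ℂ}

theorem exval_nonneg (hV : V.PosSemidef) (hA : A.PosSemidef) (hB : B.PosSemidef) :
    0 ≤ exval χ V A B :=
  (Complex.le_def.mp ((hV.kronecker (hA.kronecker hB)).dotProduct_mulVec_nonneg χ)).1

theorem exval_add_left : exval χ (V + W) A B = exval χ V A B + exval χ W A B := by
  simp only [exval, add_kronecker, add_mulVec, dotProduct_add, Complex.add_re]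

theorem exval_add_mid : exval χ V (A + A') B = exval χ V A B + exval χ V A' B := by
  simp only [exval, add_kronecker, kronecker_add, add_mulVec, dotProduct_add, Complex.add_re]

theorem exval_add_right : exval χ V A (B + B') = exval χ V A B + exval χ V A B' := by
  simp only [exval, kronecker_add, add_mulVec, dotProduct_add, Complex.add_re]

theorem exval_mono_mid (hV : V.PosSemidef) (hA : (A' - A).PosSemidef) (hB : B.PosSemidef) :
    exval χ V A B ≤ exval χ V A' B := by
  rw [← add_sub_cancel A A', exval_add_mid]
  linarith [exval_nonneg χ hV hA hB]

theorem exval_mono_right (hV : V.PosSemidef) (hA : A.PosSemidef) (hB : (B' - B).PosSemidef) :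
    exval χ V A B ≤ exval χ V A B' := by
  rw [← add_sub_cancel B B', exval_add_right]
  linarith [exval_nonneg χ hV hA hB]

end exval

theorem split_projectors_bound_general {dA dB : ℕ}
    (ψ : Fin 2 × Fin dA × Fin dB → ℂ)
    (V V' : Fin 2 → Matrix (Fin 2) (Fin 2) ℂ)
    (hVproj : ∀ a, (V a)ᴴ = V a ∧ V a * V a = V a)
    (hV'proj : ∀ a, (V' a)ᴴ = V' a ∧ V' a * V' a = V' a)
    (hVsum : V 0 + V 1 = 1) (hV'sum : V' 0 + V' 1 = 1)
    (A : Fin 2 → Matrix (Fin dA) (Fin dA) ℂ)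
    (B' : Fin 2 → Matrix (Fin dB) (Fin dB) ℂ)
    (hA : ∀ a, (A a).PosSemidef) (hAle : (1 - (A 0 + A 1)).PosSemidef)
    (hB' : ∀ b, (B' b).PosSemidef) (hB'le : (1 - (B' 0 + B' 1)).PosSemidef) :
    2 * ∑ a : Fin 2, ∑ b : Fin 2, exval ψ 1 (A a) (B' b) ≤
      (∑ a : Fin 2, ∑ b : Fin 2, exval ψ (V a + V' b) (A a) (B' b)) +
        exval ψ (V 1) (A 0) 1 + exval ψ (V 0) (A 1) 1 +
        exval ψ (V' 1) 1 (B' 0) + exval ψ (V' 0) 1 (B' 1) := by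
  have hV a := posSemidef_of_conjTranspose_eq_of_mul_self_eq (hVproj a)
  have hV' b := posSemidef_of_conjTranspose_eq_of_mul_self_eq (hV'proj b)
  have h₁ := exval_mono_right ψ (hV 1) (hA 0) hB'le
  have h₂ := exval_mono_right ψ (hV 0) (hA 1) hB'le
  have h₃ := exval_mono_mid ψ (hV' 1) hAle (hB' 0)
  have h₄ := exval_mono_mid ψ (hV' 0) hAle (hB' 1)
  have hsplitV a b : exval ψ 1 (A a) (B' b) =
      exval ψ (V 0) (A a) (B' b) + exval ψ (V 1) (A a) (B' b) := by
    rw [← hVsum, exval_add_left]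
  have hsplitV' a b : exval ψ 1 (A a) (B' b) =
      exval ψ (V' 0) (A a) (B' b) + exval ψ (V' 1) (A a) (B' b) := by
    rw [← hV'sum, exval_add_left]
  simp only [Fin.sum_univ_two, exval_add_left, exval_add_mid, exval_add_right] at h₁ h₂ h₃ h₄ ⊢
  linarith [hsplitV 0 0, hsplitV 0 1, hsplitV 1 0, hsplitV 1 1,
    hsplitV' 0 0, hsplitV' 0 1, hsplitV' 1 0, hsplitV' 1 1]

theorem split_projectors_bound {dA dB : ℕ} (hdA : 1 ≤ dA) (hdB : 1 ≤ dB)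
    (ψ : Fin 2 × Fin dA × Fin dB → ℂ) (hψ : ∑ i, ‖ψ i‖ ^ 2 = 1)
    (V V' : Fin 2 → Matrix (Fin 2) (Fin 2) ℂ)
    (hVproj : ∀ a, (V a)ᴴ = V a ∧ V a * V a = V a)
    (hV'proj : ∀ a, (V' a)ᴴ = V' a ∧ V' a * V' a = V' a)
    (hVsum : V 0 + V 1 = 1) (hV'sum : V' 0 + V' 1 = 1)
    (A : Fin 2 → Matrix (Fin dA) (Fin dA) ℂ)
    (B' : Fin 2 → Matrix (Fin dB) (Fin dB) ℂ)
    (hA : ∀ a, (A a).PosSemidef) (hAle : (1 - (A 0 + A 1)).PosSemidef)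
    (hB' : ∀ b, (B' b).PosSemidef) (hB'le : (1 - (B' 0 + B' 1)).PosSemidef) :
    2 * ∑ a : Fin 2, ∑ b : Fin 2, exval ψ 1 (A a) (B' b) ≤
      (∑ a : Fin 2, ∑ b : Fin 2, exval ψ (V a + V' b) (A a) (B' b)) +
        exval ψ (V 1) (A 0) 1 + exval ψ (V 0) (A 1) 1 +
        exval ψ (V' 1) 1 (B' 0) + exval ψ (V' 0) 1 (B' 1) :=
  split_projectors_bound_general ψ V V' hVproj hV'proj hVsum hV'sum A B' hA hAle hB' hB'le

end
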